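/- If the proposition ‖A‖ has a constructive proof, then the proposition A has a classical proof. -/

import Mathlib

/-- Terms: de Bruijn variables and a binary function symbol (union). -/
inductive Tm : Type where
  | var : Nat → Tm
  | cup : Tm → Tm → Tm
deriving DecidableEq

def Tm.rename (f : Nat → Nat) : Tm → Tm
  | .var n => .var (f n)
  | .cup s t => .cup (s.rename f) (t.rename f)

def Tm.subst (σ : Nat → Tm) : Tm → Tm
  | .var n => σ n
  | .cup s t => .cup (s.subst σ) (t.subst σ)

/-- First-order formulas over Nat-indexed predicate symbols, de Bruijn binders. -/
inductive Fm : Type where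
  | atom : Nat → List Tm → Fm
  | top : Fm
  | bot : Fm
  | neg : Fm → Fm
  | and : Fm → Fm → Fm
  | or : Fm → Fm → Fm
  | imp : Fm → Fm → Fm
  | all : Fm → Fm
  | ex : Fm → Fm
deriving DecidableEq

def liftR (f : Nat → Nat) : Nat → Nat
  | 0 => 0
  | n + 1 => f n + 1

def liftS (σ : Nat → Tm) : Nat → Tm
  | 0 => .var 0
  | n + 1 => (σ n).rename Nat.succ

def Fm.rename (f : Nat → Nat) : Fm → Fm
  | .atom p l => .atom p (l.map (Tm.rename f))
  | .top => .top
  | .bot => .bot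
  | .neg A => .neg (A.rename f)
  | .and A B => .and (A.rename f) (B.rename f)
  | .or A B => .or (A.rename f) (B.rename f)
  | .imp A B => .imp (A.rename f) (B.rename f)
  | .all A => .all (A.rename (liftR f))
  | .ex A => .ex (A.rename (liftR f))

def Fm.subst (σ : Nat → Tm) : Fm → Fm
  | .atom p l => .atom p (l.map (Tm.subst σ))
  | .top => .top
  | .bot => .bot
  | .neg A => .neg (A.subst σ)
  | .and A B => .and (A.subst σ) (B.subst σ)
  | .or A B => .or (A.subst σ) (B.subst σ)
  | .imp A B => .imp (A.subst σ) (B.subst σ)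
  | .all A => .all (A.subst (liftS σ))
  | .ex A => .ex (A.subst (liftS σ))

/-- Shift all free variables up by one. -/
def Fm.shift (A : Fm) : Fm := A.rename Nat.succ

/-- Instantiate the outermost bound variable with term `t` : `(t/x)A`. -/
def Fm.inst (t : Tm) (A : Fm) : Fm :=
  A.subst (fun n => match n with | 0 => t | n + 1 => .var n)

/-- Double negation. -/
def Fm.dn (A : Fm) : Fm := .neg (.neg A)

/-- Cut-free classical multi-conclusion sequent calculus (Figure 1). -/
inductive Cl : List Fm → List Fm → Prop where
  | ax (A : Fm) : Cl [A] [A]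
  | perm {Γ Γ' Δ Δ'} : Γ.Perm Γ' → Δ.Perm Δ' → Cl Γ Δ → Cl Γ' Δ'
  | contrL {Γ Δ A} : Cl (A :: A :: Γ) Δ → Cl (A :: Γ) Δ
  | contrR {Γ Δ A} : Cl Γ (A :: A :: Δ) → Cl Γ (A :: Δ)
  | weakL {Γ Δ A} : Cl Γ Δ → Cl (A :: Γ) Δ
  | weakR {Γ Δ A} : Cl Γ Δ → Cl Γ (A :: Δ)
  | topR {Γ Δ} : Cl Γ (.top :: Δ)
  | botL {Γ Δ} : Cl (.bot :: Γ) Δ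
  | negL {Γ Δ A} : Cl Γ (A :: Δ) → Cl (.neg A :: Γ) Δ
  | negR {Γ Δ A} : Cl (A :: Γ) Δ → Cl Γ (.neg A :: Δ)
  | andL {Γ Δ A B} : Cl (A :: B :: Γ) Δ → Cl (.and A B :: Γ) Δ
  | andR {Γ Δ A B} : Cl Γ (A :: Δ) → Cl Γ (B :: Δ) → Cl Γ (.and A B :: Δ)
  | orL {Γ Δ A B} : Cl (A :: Γ) Δ → Cl (B :: Γ) Δ → Cl (.or A B :: Γ) Δ
  | orR1 {Γ Δ A B} : Cl Γ (A :: Δ) → Cl Γ (.or A B :: Δ)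
  | orR2 {Γ Δ A B} : Cl Γ (B :: Δ) → Cl Γ (.or A B :: Δ)
  | impL {Γ Δ A B} : Cl Γ (A :: Δ) → Cl (B :: Γ) Δ → Cl (.imp A B :: Γ) Δ
  | impR {Γ Δ A B} : Cl (A :: Γ) (B :: Δ) → Cl Γ (.imp A B :: Δ)
  | allL {Γ Δ A} (t : Tm) : Cl (A.inst t :: Γ) Δ → Cl (.all A :: Γ) Δ
  | allR {Γ Δ A} : Cl (Γ.map Fm.shift) (A :: Δ.map Fm.shift) → Cl Γ (.all A :: Δ)
  | exL {Γ Δ A} : Cl (A :: Γ.map Fm.shift) (Δ.map Fm.shift) → Cl (.ex A :: Γ) Δ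
  | exR {Γ Δ A} (t : Tm) : Cl Γ (A.inst t :: Δ) → Cl Γ (.ex A :: Δ)

/-- Constructive (intuitionistic) single-conclusion sequent calculus:
the restriction of the classical calculus to sequents with at most one
conclusion, with the adapted ⇒-left rule. -/
inductive Intu : List Fm → Option Fm → Prop where
  | ax (A : Fm) : Intu [A] (some A)
  | perm {Γ Γ' Δ} : Γ.Perm Γ' → Intu Γ Δ → Intu Γ' Δ
  | contrL {Γ Δ A} : Intu (A :: A :: Γ) Δ → Intu (A :: Γ) Δ
  | weakL {Γ Δ A} : Intu Γ Δ → Intu (A :: Γ) Δ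
  | weakR {Γ A} : Intu Γ none → Intu Γ (some A)
  | topR {Γ} : Intu Γ (some .top)
  | botL {Γ Δ} : Intu (.bot :: Γ) Δ
  | negL {Γ A} : Intu Γ (some A) → Intu (.neg A :: Γ) none
  | negR {Γ A} : Intu (A :: Γ) none → Intu Γ (some (.neg A))
  | andL {Γ Δ A B} : Intu (A :: B :: Γ) Δ → Intu (.and A B :: Γ) Δ
  | andR {Γ A B} : Intu Γ (some A) → Intu Γ (some B) → Intu Γ (some (.and A B))
  | orL {Γ Δ A B} : Intu (A :: Γ) Δ → Intu (B :: Γ) Δ → Intu (.or A B :: Γ) Δ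
  | orR1 {Γ A B} : Intu Γ (some A) → Intu Γ (some (.or A B))
  | orR2 {Γ A B} : Intu Γ (some B) → Intu Γ (some (.or A B))
  | impL {Γ Δ A B} : Intu Γ (some A) → Intu (B :: Γ) Δ → Intu (.imp A B :: Γ) Δ
  | impR {Γ A B} : Intu (A :: Γ) (some B) → Intu Γ (some (.imp A B))
  | allL {Γ Δ A} (t : Tm) : Intu (A.inst t :: Γ) Δ → Intu (.all A :: Γ) Δ
  | allR {Γ A} : Intu (Γ.map Fm.shift) (some A) → Intu Γ (some (.all A))
  | exL {Γ Δ A} : Intu (A :: Γ.map Fm.shift) (Δ.map Fm.shift) → Intu (.ex A :: Γ) Δ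
  | exR {Γ A} (t : Tm) : Intu Γ (some (A.inst t)) → Intu Γ (some (.ex A))

/-- Dowek's translation ‖·‖: double negations both before and after each
connective and quantifier, atoms unchanged. -/
def Fm.bar : Fm → Fm
  | .atom p l => .atom p l
  | .top => Fm.dn .top
  | .bot => Fm.dn .bot
  | .neg A => Fm.dn (Fm.dn (.neg A.bar))
  | .and A B => Fm.dn (.and (Fm.dn A.bar) (Fm.dn B.bar))
  | .or A B => Fm.dn (.or (Fm.dn A.bar) (Fm.dn B.bar))
  | .imp A B => Fm.dn (.imp (Fm.dn A.bar) (Fm.dn B.bar))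
  | .all A => Fm.dn (.all (Fm.dn A.bar))
  | .ex A => Fm.dn (.ex (Fm.dn A.bar))

/-- The light translation |·|: like ‖·‖ but the outermost double negation
is removed. -/
def Fm.light : Fm → Fm
  | .atom p l => .atom p l
  | .top => .top
  | .bot => .bot
  | .neg A => .neg (Fm.dn A.bar)
  | .and A B => .and (Fm.dn A.bar) (Fm.dn B.bar)
  | .or A B => .or (Fm.dn A.bar) (Fm.dn B.bar)
  | .imp A B => .imp (Fm.dn A.bar) (Fm.dn B.bar)
  | .all A => .all (Fm.dn A.bar)
  | .ex A => .ex (Fm.dn A.bar)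

/-- A formula is atomic if it is of the form `atom p l`. -/
def Fm.isAtom : Fm → Prop
  | .atom _ _ => True
  | _ => False

/-!
A constructive derivation is in particular a classical one, so `‖A‖` is classically provable.
Now `‖A‖` arises from `A` by inserting double negations, and in the cut-free classical calculus
such insertions can be undone: by induction on a derivation, every formula of the end-sequent may
be replaced by a formula from which it arises by inserting double negations. The only rule that
does not simply commute with this replacement is a negation rule introducing an inserted `¬¬C`;
its premise then carries `¬C` on the opposite side, and the invertibility of the negation rules
moves `C` back where it belongs. An axiom `B ⊢ B` becomes `X ⊢ Y` for two formulas `X`, `Y` from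
which `B` arises, and such sequents are derivable by recursion on `B`.
-/

theorem Tm.subst_rename (f : ℕ → ℕ) (σ : ℕ → Tm) (t : Tm) :
    (t.rename f).subst σ = t.subst (σ ∘ f) := by
  induction t <;> simp_all [Tm.rename, Tm.subst]

theorem Tm.subst_var : Tm.subst .var = id := by
  funext t; induction t <;> simp_all [Tm.subst]

theorem liftS_comp_liftR (σ : ℕ → Tm) (f : ℕ → ℕ) : liftS σ ∘ liftR f = liftS (σ ∘ f) := by
  funext n; cases n <;> rfl

theorem liftS_var : liftS .var = .var := by
  funext n; cases n <;> rfl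

theorem Fm.subst_rename (f : ℕ → ℕ) (σ : ℕ → Tm) (A : Fm) :
    (A.rename f).subst σ = A.subst (σ ∘ f) := by
  induction A generalizing f σ <;>
    simp_all [Fm.rename, Fm.subst, Tm.subst_rename, liftS_comp_liftR]

theorem Fm.subst_var (A : Fm) : A.subst .var = A := by
  induction A <;> simp_all [Fm.subst, liftS_var, Tm.subst_var]

theorem Fm.inst_var_zero_rename_liftR_succ (A : Fm) :
    (A.rename (liftR .succ)).inst (.var 0) = A := by
  rw [Fm.inst, Fm.subst_rename]
  convert Fm.subst_var A
  funext n; cases n <;> rfl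

theorem Fm.shift_neg (A : Fm) : (Fm.neg A).shift = .neg A.shift := rfl

namespace Cl

variable {Γ Γ' Δ Δ' : List Fm}

theorem weakenL (Ξ : List Fm) (h : Cl Γ Δ) : Cl (Ξ ++ Γ) Δ := by
  induction Ξ with
  | nil => exact h
  | cons _ _ ih => exact ih.weakL

theorem weakenR (Θ : List Fm) (h : Cl Γ Δ) : Cl Γ (Θ ++ Δ) := by
  induction Θ with
  | nil => exact h
  | cons _ _ ih => exact ih.weakR

theorem contractL : ∀ {Ξ : List Fm}, Ξ ⊆ Γ → Cl (Ξ ++ Γ) Δ → Cl Γ Δ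
  | [], _, h => h
  | a :: Ξ, hΞ, h => by
    have hp : (Ξ ++ Γ).Perm (a :: (Ξ ++ Γ.erase a)) :=
      ((List.perm_cons_erase (hΞ List.mem_cons_self)).append_left Ξ).trans List.perm_middle
    exact contractL (List.subset_of_cons_subset hΞ)
      (perm hp.symm .rfl (contrL (perm (hp.cons a) .rfl h)))

theorem contractR : ∀ {Θ : List Fm}, Θ ⊆ Δ → Cl Γ (Θ ++ Δ) → Cl Γ Δ
  | [], _, h => h
  | a :: Θ, hΘ, h => by
    have hp : (Θ ++ Δ).Perm (a :: (Θ ++ Δ.erase a)) :=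
      ((List.perm_cons_erase (hΘ List.mem_cons_self)).append_left Θ).trans List.perm_middle
    exact contractR (List.subset_of_cons_subset hΘ)
      (perm .rfl hp.symm (contrR (perm .rfl (hp.cons a) h)))

theorem mono (h : Cl Γ Δ) (hΓ : Γ ⊆ Γ') (hΔ : Δ ⊆ Δ') : Cl Γ' Δ' :=
  contractR hΔ <| contractL hΓ <|
    perm List.perm_append_comm List.perm_append_comm ((h.weakenL Γ').weakenR Δ')

theorem absorbL {X : Fm} (h : Cl (X :: Γ) Δ) (hX : X ∈ Γ) : Cl Γ Δ :=
  h.mono (List.cons_subset.2 ⟨hX, .refl _⟩) (.refl _)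

theorem absorbR {Y : Fm} (h : Cl Γ (Y :: Δ)) (hY : Y ∈ Δ) : Cl Γ Δ :=
  h.mono (.refl _) (List.cons_subset.2 ⟨hY, .refl _⟩)

theorem swapL {A B : Fm} (h : Cl (A :: B :: Γ) Δ) : Cl (B :: A :: Γ) Δ :=
  perm (.swap B A Γ) .rfl h

/-- Inverting all copies of `¬A` at once is what gets the contraction case through. -/
theorem negR_inv_all (h : Cl Γ Δ) (A : Fm) (Γ' Δ' : List Fm) (hΓ : A :: Γ ⊆ Γ')
    (hΔ : Δ.filter (· ≠ .neg A) ⊆ Δ') : Cl Γ' Δ' := by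
  induction h generalizing A Γ' Δ' with
  | ax B =>
    by_cases hB : B = .neg A
    · subst hB; exact (negL (ax A)).mono (by grind) (by grind)
    · exact (ax B).mono (by grind) (by grind)
  | perm p q _ ih =>
    exact ih A Γ' Δ' (List.Subset.trans (p.cons A).subset hΓ)
      (List.Subset.trans (q.filter _).subset hΔ)
  | contrL _ ih | contrR _ ih | weakL _ ih | weakR _ ih => exact ih A Γ' Δ' (by grind) (by grind)
  | topR => exact topR.absorbR (by grind)
  | botL => exact botL.absorbL (by grind)
  | @negL _ _ B _ ih => refine (negL (ih A Γ' (B :: Δ') ?_ ?_)).absorbL ?_ <;> grind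
  | @negR _ _ B _ ih =>
    by_cases hB : B = A
    · subst hB; exact ih B Γ' Δ' (by grind) (by grind)
    · refine (negR (ih A (B :: Γ') Δ' ?_ ?_)).absorbR ?_ <;> grind
  | @andL _ _ B C _ ih => refine (andL (ih A (B :: C :: Γ') Δ' ?_ ?_)).absorbL ?_ <;> grind
  | @andR _ _ B C _ _ ih₁ ih₂ =>
    refine (andR (ih₁ A Γ' (B :: Δ') ?_ ?_) (ih₂ A Γ' (C :: Δ') ?_ ?_)).absorbR ?_ <;> grind
  | @orL _ _ B C _ _ ih₁ ih₂ =>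
    refine (orL (ih₁ A (B :: Γ') Δ' ?_ ?_) (ih₂ A (C :: Γ') Δ' ?_ ?_)).absorbL ?_ <;> grind
  | @orR1 _ _ B C _ ih => refine (orR1 (B := C) (ih A Γ' (B :: Δ') ?_ ?_)).absorbR ?_ <;> grind
  | @orR2 _ _ B C _ ih => refine (orR2 (A := B) (ih A Γ' (C :: Δ') ?_ ?_)).absorbR ?_ <;> grind
  | @impL _ _ B C _ _ ih₁ ih₂ =>
    refine (impL (ih₁ A Γ' (B :: Δ') ?_ ?_) (ih₂ A (C :: Γ') Δ' ?_ ?_)).absorbL ?_ <;> grind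
  | @impR _ _ B C _ ih => refine (impR (ih A (B :: Γ') (C :: Δ') ?_ ?_)).absorbR ?_ <;> grind
  | @allL _ _ B t _ ih => refine (allL t (ih A (B.inst t :: Γ') Δ' ?_ ?_)).absorbL ?_ <;> grind
  | @allR _ _ B _ ih =>
    refine (allR (ih A.shift (Γ'.map Fm.shift) (B :: Δ'.map Fm.shift) ?_ ?_)).absorbR ?_ <;>
      grind [Fm.shift_neg]
  | @exL _ _ B _ ih =>
    refine (exL (ih A.shift (B :: Γ'.map Fm.shift) (Δ'.map Fm.shift) ?_ ?_)).absorbL ?_ <;>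
      grind [Fm.shift_neg]
  | @exR _ _ B t _ ih => refine (exR t (ih A Γ' (B.inst t :: Δ') ?_ ?_)).absorbR ?_ <;> grind

theorem negL_inv_all (h : Cl Γ Δ) (A : Fm) (Γ' Δ' : List Fm)
    (hΓ : Γ.filter (· ≠ .neg A) ⊆ Γ') (hΔ : A :: Δ ⊆ Δ') : Cl Γ' Δ' := by
  induction h generalizing A Γ' Δ' with
  | ax B =>
    by_cases hB : B = .neg A
    · subst hB; exact (negR (ax A)).mono (by grind) (by grind)
    · exact (ax B).mono (by grind) (by grind)
  | perm p q _ ih =>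
    exact ih A Γ' Δ' (List.Subset.trans (p.filter _).subset hΓ)
      (List.Subset.trans (q.cons A).subset hΔ)
  | contrL _ ih | contrR _ ih | weakL _ ih | weakR _ ih => exact ih A Γ' Δ' (by grind) (by grind)
  | topR => exact topR.absorbR (by grind)
  | botL => exact botL.absorbL (by grind)
  | @negL _ _ B _ ih =>
    by_cases hB : B = A
    · subst hB; exact ih B Γ' Δ' (by grind) (by grind)
    · refine (negL (ih A Γ' (B :: Δ') ?_ ?_)).absorbL ?_ <;> grind
  | @negR _ _ B _ ih => refine (negR (ih A (B :: Γ') Δ' ?_ ?_)).absorbR ?_ <;> grind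
  | @andL _ _ B C _ ih => refine (andL (ih A (B :: C :: Γ') Δ' ?_ ?_)).absorbL ?_ <;> grind
  | @andR _ _ B C _ _ ih₁ ih₂ =>
    refine (andR (ih₁ A Γ' (B :: Δ') ?_ ?_) (ih₂ A Γ' (C :: Δ') ?_ ?_)).absorbR ?_ <;> grind
  | @orL _ _ B C _ _ ih₁ ih₂ =>
    refine (orL (ih₁ A (B :: Γ') Δ' ?_ ?_) (ih₂ A (C :: Γ') Δ' ?_ ?_)).absorbL ?_ <;> grind
  | @orR1 _ _ B C _ ih => refine (orR1 (B := C) (ih A Γ' (B :: Δ') ?_ ?_)).absorbR ?_ <;> grind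
  | @orR2 _ _ B C _ ih => refine (orR2 (A := B) (ih A Γ' (C :: Δ') ?_ ?_)).absorbR ?_ <;> grind
  | @impL _ _ B C _ _ ih₁ ih₂ =>
    refine (impL (ih₁ A Γ' (B :: Δ') ?_ ?_) (ih₂ A (C :: Γ') Δ' ?_ ?_)).absorbL ?_ <;> grind
  | @impR _ _ B C _ ih => refine (impR (ih A (B :: Γ') (C :: Δ') ?_ ?_)).absorbR ?_ <;> grind
  | @allL _ _ B t _ ih => refine (allL t (ih A (B.inst t :: Γ') Δ' ?_ ?_)).absorbL ?_ <;> grind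
  | @allR _ _ B _ ih =>
    refine (allR (ih A.shift (Γ'.map Fm.shift) (B :: Δ'.map Fm.shift) ?_ ?_)).absorbR ?_ <;>
      grind [Fm.shift_neg]
  | @exL _ _ B _ ih =>
    refine (exL (ih A.shift (B :: Γ'.map Fm.shift) (Δ'.map Fm.shift) ?_ ?_)).absorbL ?_ <;>
      grind [Fm.shift_neg]
  | @exR _ _ B t _ ih => refine (exR t (ih A Γ' (B.inst t :: Δ') ?_ ?_)).absorbR ?_ <;> grind

theorem negR_inv {A : Fm} (h : Cl Γ (.neg A :: Δ)) : Cl (A :: Γ) Δ :=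
  h.negR_inv_all A _ _ (.refl _) (by grind)

theorem negL_inv {A : Fm} (h : Cl (.neg A :: Γ) Δ) : Cl Γ (A :: Δ) :=
  h.negL_inv_all A _ _ (by grind) (.refl _)

end Cl

inductive Fm.DnExpansion : Fm → Fm → Prop
  | atom (p : ℕ) (l : List Tm) : DnExpansion (.atom p l) (.atom p l)
  | top : DnExpansion .top .top
  | bot : DnExpansion .bot .bot
  | neg {A B : Fm} : DnExpansion A B → DnExpansion (.neg A) (.neg B)
  | and {A A' B B' : Fm} :
      DnExpansion A A' → DnExpansion B B' → DnExpansion (.and A B) (.and A' B')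
  | or {A A' B B' : Fm} :
      DnExpansion A A' → DnExpansion B B' → DnExpansion (.or A B) (.or A' B')
  | imp {A A' B B' : Fm} :
      DnExpansion A A' → DnExpansion B B' → DnExpansion (.imp A B) (.imp A' B')
  | all {A B : Fm} : DnExpansion A B → DnExpansion (.all A) (.all B)
  | ex {A B : Fm} : DnExpansion A B → DnExpansion (.ex A) (.ex B)
  | dn {A B : Fm} : DnExpansion A B → DnExpansion A (.neg (.neg B))

namespace Fm.DnExpansion

theorem bar (A : Fm) : A.DnExpansion A.bar := by
  induction A with
  | atom p l => exact atom p l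
  | top => exact top.dn
  | bot => exact bot.dn
  | neg _ ih => exact ih.neg.dn.dn
  | and _ _ ih₁ ih₂ => exact (ih₁.dn.and ih₂.dn).dn
  | or _ _ ih₁ ih₂ => exact (ih₁.dn.or ih₂.dn).dn
  | imp _ _ ih₁ ih₂ => exact (ih₁.dn.imp ih₂.dn).dn
  | all _ ih => exact ih.dn.all.dn
  | ex _ ih => exact ih.dn.ex.dn

theorem rename {A B : Fm} (h : A.DnExpansion B) (f : ℕ → ℕ) :
    (A.rename f).DnExpansion (B.rename f) := by
  induction h generalizing f <;> constructor <;> apply_assumption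

theorem subst {A B : Fm} (h : A.DnExpansion B) (σ : ℕ → Tm) :
    (A.subst σ).DnExpansion (B.subst σ) := by
  induction h generalizing σ <;> constructor <;> apply_assumption

theorem shift {A B : Fm} (h : A.DnExpansion B) : A.shift.DnExpansion B.shift :=
  h.rename _

theorem inst {A B : Fm} (h : A.DnExpansion B) (t : Tm) : (A.inst t).DnExpansion (B.inst t) :=
  h.subst _

end Fm.DnExpansion

theorem Cl.ax_of_dnExpansion {X Y B : Fm} (hX : X.DnExpansion B) (hY : Y.DnExpansion B) :
    Cl [X] [Y] := by
  cases hX with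
  | atom => cases hY with | atom => exact ax _
  | top => cases hY with | top => exact topR
  | bot => cases hY with | bot => exact botL
  | neg hX =>
    cases hY with
    | neg hY => exact negR (swapL (negL (ax_of_dnExpansion hY hX)))
    | dn hY =>
      -- `¬Y` also expands to `¬B'`, where `B = ¬¬B'`; the negation is then inverted away.
      exact negL ((ax_of_dnExpansion hY.neg hX).negL_inv.mono (by grind) (by grind))
  | dn hX =>
    cases hY with
    | neg hY => exact negR ((ax_of_dnExpansion hY hX.neg).negR_inv.mono (by grind) (by grind))
    | dn hY => exact ax_of_dnExpansion hX hY
  | and hX₁ hX₂ =>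
    cases hY with
    | and hY₁ hY₂ =>
      exact andR (andL ((ax_of_dnExpansion hX₁ hY₁).mono (by grind) (by grind)))
        (andL ((ax_of_dnExpansion hX₂ hY₂).mono (by grind) (by grind)))
  | or hX₁ hX₂ =>
    cases hY with
    | or hY₁ hY₂ =>
      exact orL (orR1 (ax_of_dnExpansion hX₁ hY₁)) (orR2 (ax_of_dnExpansion hX₂ hY₂))
  | imp hX₁ hX₂ =>
    cases hY with
    | imp hY₁ hY₂ =>
      refine impR (swapL (impL ((ax_of_dnExpansion hY₁ hX₁).mono ?_ ?_)
        ((ax_of_dnExpansion hX₂ hY₂).mono ?_ ?_))) <;> grind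
  | all hX =>
    cases hY with
    | all hY =>
      refine allR (allL (.var 0) ?_)
      rw [Fm.inst_var_zero_rename_liftR_succ]
      exact ax_of_dnExpansion hX hY
  | ex hX =>
    cases hY with
    | ex hY =>
      refine exL (exR (.var 0) ?_)
      rw [Fm.inst_var_zero_rename_liftR_succ]
      exact ax_of_dnExpansion hX hY
termination_by sizeOf B

def DnCover (Γ' Γ : List Fm) : Prop :=
  ∀ C ∈ Γ, ∃ X ∈ Γ', X.DnExpansion C

namespace DnCover

variable {Γ Γ' Γ₀ : List Fm} {C X : Fm}

theorem head (h : DnCover Γ' (C :: Γ)) : ∃ X ∈ Γ', X.DnExpansion C :=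
  h C List.mem_cons_self

theorem mono (h : DnCover Γ' Γ) (hΓ : Γ₀ ⊆ Γ) : DnCover Γ' Γ₀ :=
  fun C hC => h C (hΓ hC)

theorem tail (h : DnCover Γ' (C :: Γ)) : DnCover Γ' Γ :=
  h.mono (List.subset_cons_self C Γ)

theorem cons (hX : X.DnExpansion C) (h : DnCover Γ' Γ) : DnCover (X :: Γ') (C :: Γ) := by
  intro D hD
  rcases List.mem_cons.1 hD with rfl | hD
  · exact ⟨X, List.mem_cons_self, hX⟩
  · obtain ⟨Y, hY, hYD⟩ := h D hD
    exact ⟨Y, List.mem_cons_of_mem X hY, hYD⟩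

theorem map_shift (h : DnCover Γ' Γ) : DnCover (Γ'.map Fm.shift) (Γ.map Fm.shift) := by
  simp only [DnCover, List.mem_map]
  rintro _ ⟨C, hC, rfl⟩
  obtain ⟨X, hX, hXC⟩ := h C hC
  exact ⟨X.shift, ⟨X, hX, rfl⟩, hXC.shift⟩

end DnCover

namespace Cl

theorem of_dnCover {Γ Δ : List Fm} (h : Cl Γ Δ) (Γ' Δ' : List Fm) (hΓ : DnCover Γ' Γ)
    (hΔ : DnCover Δ' Δ) : Cl Γ' Δ' := by
  induction h generalizing Γ' Δ' with
  | ax B =>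
    obtain ⟨X, hXΓ, hX⟩ := hΓ.head
    obtain ⟨Y, hYΔ, hY⟩ := hΔ.head
    exact (ax_of_dnExpansion hX hY).mono (by grind) (by grind)
  | perm p q _ ih => exact ih Γ' Δ' (hΓ.mono p.subset) (hΔ.mono q.subset)
  | contrL _ ih | weakL _ ih => exact ih Γ' Δ' (hΓ.mono (by grind)) hΔ
  | contrR _ ih | weakR _ ih => exact ih Γ' Δ' hΓ (hΔ.mono (by grind))
  | topR =>
    obtain ⟨Y, hYΔ, hY⟩ := hΔ.head
    cases hY with | top => exact topR.absorbR hYΔ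
  | botL =>
    obtain ⟨X, hXΓ, hX⟩ := hΓ.head
    cases hX with | bot => exact botL.absorbL hXΓ
  | negL _ ih =>
    obtain ⟨X, hXΓ, hX⟩ := hΓ.head
    cases hX with
    | neg hX => exact (negL (ih Γ' (_ :: Δ') hΓ.tail (hΔ.cons hX))).absorbL hXΓ
    | dn hX => exact (ih Γ' (_ :: Δ') hΓ.tail (hΔ.cons hX.neg)).negR_inv.absorbL hXΓ
  | negR _ ih =>
    obtain ⟨Y, hYΔ, hY⟩ := hΔ.head
    cases hY with
    | neg hY => exact (negR (ih (_ :: Γ') Δ' (hΓ.cons hY) hΔ.tail)).absorbR hYΔ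
    | dn hY => exact (ih (_ :: Γ') Δ' (hΓ.cons hY.neg) hΔ.tail).negL_inv.absorbR hYΔ
  | andL _ ih =>
    obtain ⟨X, hXΓ, hX⟩ := hΓ.head
    cases hX with
    | and hX₁ hX₂ =>
      exact (andL (ih (_ :: _ :: Γ') Δ' ((hΓ.tail.cons hX₂).cons hX₁) hΔ)).absorbL hXΓ
  | andR _ _ ih₁ ih₂ =>
    obtain ⟨Y, hYΔ, hY⟩ := hΔ.head
    cases hY with
    | and hY₁ hY₂ =>
      exact (andR (ih₁ Γ' (_ :: Δ') hΓ (hΔ.tail.cons hY₁))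
        (ih₂ Γ' (_ :: Δ') hΓ (hΔ.tail.cons hY₂))).absorbR hYΔ
  | orL _ _ ih₁ ih₂ =>
    obtain ⟨X, hXΓ, hX⟩ := hΓ.head
    cases hX with
    | or hX₁ hX₂ =>
      exact (orL (ih₁ (_ :: Γ') Δ' (hΓ.tail.cons hX₁) hΔ)
        (ih₂ (_ :: Γ') Δ' (hΓ.tail.cons hX₂) hΔ)).absorbL hXΓ
  | orR1 _ ih =>
    obtain ⟨Y, hYΔ, hY⟩ := hΔ.head
    cases hY with
    | or hY₁ _ => exact (orR1 (ih Γ' (_ :: Δ') hΓ (hΔ.tail.cons hY₁))).absorbR hYΔ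
  | orR2 _ ih =>
    obtain ⟨Y, hYΔ, hY⟩ := hΔ.head
    cases hY with
    | or _ hY₂ => exact (orR2 (ih Γ' (_ :: Δ') hΓ (hΔ.tail.cons hY₂))).absorbR hYΔ
  | impL _ _ ih₁ ih₂ =>
    obtain ⟨X, hXΓ, hX⟩ := hΓ.head
    cases hX with
    | imp hX₁ hX₂ =>
      exact (impL (ih₁ Γ' (_ :: Δ') hΓ.tail (hΔ.cons hX₁))
        (ih₂ (_ :: Γ') Δ' (hΓ.tail.cons hX₂) hΔ)).absorbL hXΓ
  | impR _ ih =>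
    obtain ⟨Y, hYΔ, hY⟩ := hΔ.head
    cases hY with
    | imp hY₁ hY₂ =>
      exact (impR (ih (_ :: Γ') (_ :: Δ') (hΓ.cons hY₁) (hΔ.tail.cons hY₂))).absorbR hYΔ
  | allL t _ ih =>
    obtain ⟨X, hXΓ, hX⟩ := hΓ.head
    cases hX with
    | all hX => exact (allL t (ih (_ :: Γ') Δ' (hΓ.tail.cons (hX.inst t)) hΔ)).absorbL hXΓ
  | allR _ ih =>
    obtain ⟨Y, hYΔ, hY⟩ := hΔ.head
    cases hY with
    | all hY =>
      exact (allR (ih _ (_ :: _) hΓ.map_shift (hΔ.tail.map_shift.cons hY))).absorbR hYΔ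
  | exL _ ih =>
    obtain ⟨X, hXΓ, hX⟩ := hΓ.head
    cases hX with
    | ex hX => exact (exL (ih (_ :: _) _ (hΓ.tail.map_shift.cons hX) hΔ.map_shift)).absorbL hXΓ
  | exR t _ ih =>
    obtain ⟨Y, hYΔ, hY⟩ := hΔ.head
    cases hY with
    | ex hY => exact (exR t (ih Γ' (_ :: Δ') hΓ (hΔ.tail.cons (hY.inst t)))).absorbR hYΔ

theorem of_intu {Γ : List Fm} {Δ : Option Fm} (h : Intu Γ Δ) : Cl Γ Δ.toList := by
  induction h with
  | ax A => exact ax A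
  | perm p _ ih => exact perm p .rfl ih
  | contrL _ ih => exact contrL ih
  | weakL _ ih => exact weakL ih
  | weakR _ ih => exact weakR ih
  | topR => exact topR
  | botL => exact botL
  | negL _ ih => exact negL ih
  | negR _ ih => exact negR ih
  | andL _ ih => exact andL ih
  | andR _ _ ih₁ ih₂ => exact andR ih₁ ih₂
  | orL _ _ ih₁ ih₂ => exact orL ih₁ ih₂
  | orR1 _ ih => exact orR1 ih
  | orR2 _ ih => exact orR2 ih
  | impL _ _ ih₁ ih₂ => exact impL (ih₁.mono (.refl _) (by simp)) ih₂
  | impR _ ih => exact impR ih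
  | allL t _ ih => exact allL t ih
  | allR _ ih => exact allR ih
  | exL _ ih => exact exL (Option.toList_map .. ▸ ih)
  | exR t _ ih => exact exR t ih

end Cl

theorem stmt6 (A : Fm) (h : Intu [] (some A.bar)) : Cl [] [A] :=
  (Cl.of_intu h).of_dnCover [] [A] (by simp [DnCover]) (by simpa [DnCover] using .bar A)
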